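/- Let φ be an L(B, B*)-valued Carathéodory function on a neighborhood Ω of 0, and let L(φ) be the reproducing kernel Hilbert space with kernel k_φ(z,w) = (φ(z) + φ(w)*|_B)/(2(1 − z w̄)). Then ‖(k_φ(·,w) − k_φ(·,0))b‖²_{L(φ)} = (|w|²/(1 − |w|²)) · Re⟨φ(w)b, b⟩ for all w ∈ Ω ∩ 𝔻 and b ∈ B; consequently every f ∈ L(φ) is weakly continuous at the origin: ⟨f(w), b⟩ → ⟨f(0), b⟩ as w → 0. -/

import Mathlib

open scoped ComplexOrder
open Filter Metric

/-- The conjugate dual of a complex normed space: continuous anti-linear functionals. -/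
abbrev ConjDual (B : Type*) [NormedAddCommGroup B] [NormedSpace ℂ B] :=
  B →SL[starRingEnd ℂ] ℂ

/-- The scalar pairing `⟨k_φ(z,w)b, c⟩` of the Carathéodory kernel
`k_φ(z,w) = (φ(z) + φ(w)*|_B)/(2(1 - z w̄))`. -/
noncomputable def caraKernel {B : Type*} [NormedAddCommGroup B] [NormedSpace ℂ B]
    (φ : ℂ → (B →L[ℂ] ConjDual B)) (z w : ℂ) (b c : B) : ℂ :=
  (2 * (1 - z * (starRingEnd ℂ) w))⁻¹ * (φ z b c + (starRingEnd ℂ) (φ w c b))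

/-!
Expanding `‖e w b - e 0 b‖²` with the reproducing property expresses it through
`k_φ(w,w)`, `k_φ(0,0)` and `k_φ(w,0)`. On the diagonal `k_φ(w,w)b·b = Re⟨φ(w)b,b⟩/(1-|w|²)`,
and `k_φ(w,0) = (φ(w) + φ(0)*)/2`, so the expansion collapses to
`|w|²/(1-|w|²)·Re⟨φ(w)b,b⟩`, which tends to `0` by the weak continuity of `φ` at `0`.
Hence `k_φ(·,w)b → k_φ(·,0)b` in `L(φ)`, and `⟨f(w),b⟩ = ⟨k_φ(·,w)b, f⟩` converges.
-/

open ComplexConjugate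

section CaraKernel

variable {B : Type*} [NormedAddCommGroup B] [NormedSpace ℂ B] (φ : ℂ → (B →L[ℂ] ConjDual B))

theorem caraKernel_self (w : ℂ) (b : B) :
    caraKernel φ w w b b = ((1 - ‖w‖ ^ 2)⁻¹ * (φ w b b).re : ℝ) := by
  have hw : w * conj w = ((‖w‖ ^ 2 : ℝ) : ℂ) := by
    rw [Complex.mul_conj, Complex.normSq_eq_norm_sq]
  rw [caraKernel, hw, Complex.add_conj]
  push_cast
  field_simp

theorem caraKernel_zero_right (z : ℂ) (b c : B) :
    caraKernel φ z 0 b c = (φ z b c + conj (φ 0 c b)) / 2 := by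
  simp [caraKernel, div_eq_inv_mul]

variable {H : Type*} [NormedAddCommGroup H] [InnerProductSpace ℂ H]
  {Ω : Set ℂ} {e : ℂ → B → H}

theorem norm_sub_sq_of_inner_eq_caraKernel
    (hk : ∀ w ∈ Ω, ∀ z ∈ Ω, ∀ b c : B, inner ℂ (e w b) (e z c) = caraKernel φ w z c b)
    (h0 : (0 : ℂ) ∈ Ω) {w : ℂ} (hw : w ∈ Ω) (hw1 : ‖w‖ ≠ 1) (b : B) :
    ‖e w b - e 0 b‖ ^ 2 = ‖w‖ ^ 2 / (1 - ‖w‖ ^ 2) * (φ w b b).re := by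
  have hnorm_sq : ∀ z ∈ Ω, ‖e z b‖ ^ 2 = (caraKernel φ z z b b).re := fun z hz => by
    rw [← inner_self_eq_norm_sq (𝕜 := ℂ), hk z hz z hz, RCLike.re_to_complex]
  have hden : 1 - ‖w‖ ^ 2 ≠ 0 := by
    rwa [sub_ne_zero, ne_comm, Ne, pow_eq_one_iff_of_nonneg (norm_nonneg w) two_ne_zero]
  rw [norm_sub_sq (𝕜 := ℂ), hk w hw 0 h0, RCLike.re_to_complex, hnorm_sq w hw, hnorm_sq 0 h0,
    caraKernel_zero_right, caraKernel_self, caraKernel_self]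
  simp only [Complex.ofReal_re, Complex.div_ofNat_re, Complex.add_re, Complex.conj_re, norm_zero]
  field_simp
  ring

theorem tendsto_nhdsWithin_zero_of_inner_eq_caraKernel
    (hk : ∀ w ∈ Ω, ∀ z ∈ Ω, ∀ b c : B, inner ℂ (e w b) (e z c) = caraKernel φ w z c b)
    (hΩ : Ω ∈ nhds (0 : ℂ))
    (hwc : ∀ b : B, Tendsto (fun z => φ z b b) (nhdsWithin 0 Ω) (nhds (φ 0 b b))) (b : B) :
    Tendsto (fun w => e w b) (nhdsWithin 0 Ω) (nhds (e 0 b)) := by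
  have hnorm : Tendsto (fun w : ℂ => ‖w‖) (nhdsWithin 0 Ω) (nhds 0) :=
    tendsto_norm_zero.mono_left nhdsWithin_le_nhds
  have hbound : Tendsto (fun w : ℂ => ‖w‖ ^ 2 / (1 - ‖w‖ ^ 2) * (φ w b b).re)
      (nhdsWithin 0 Ω) (nhds 0) := by
    simpa using ((hnorm.pow 2).div (tendsto_const_nhds.sub (hnorm.pow 2)) (by simp)).mul
      (Complex.continuous_re.continuousAt.tendsto.comp (hwc b))
  have hsmall : ∀ᶠ w in nhdsWithin 0 Ω, w ∈ Ω ∧ ‖w‖ < 1 :=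
    eventually_mem_nhdsWithin.and (hnorm.eventually (gt_mem_nhds one_pos))
  have hsqrt : Tendsto (fun w : ℂ => √(‖w‖ ^ 2 / (1 - ‖w‖ ^ 2) * (φ w b b).re))
      (nhdsWithin 0 Ω) (nhds 0) := by
    simpa using hbound.sqrt
  rw [tendsto_iff_norm_sub_tendsto_zero]
  refine hsqrt.congr' ?_
  filter_upwards [hsmall] with w ⟨hw, hw1⟩
  rw [← norm_sub_sq_of_inner_eq_caraKernel φ hk (mem_of_mem_nhds hΩ) hw hw1.ne b,
    Real.sqrt_sq (norm_nonneg _)]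

end CaraKernel

/-- `L(φ)` is modelled by `J : H → (ℂ → B*)`, and `e w b` is the kernel section `k_φ(·,w)b`. -/
theorem caratheodory_kernel_weak_continuity {B : Type*} [NormedAddCommGroup B]
    [NormedSpace ℂ B]
    (Ω : Set ℂ) (hΩ : Ω ∈ nhds (0 : ℂ))
    (φ : ℂ → (B →L[ℂ] ConjDual B))
    (hwc : ∀ b : B, Tendsto (fun z => φ z b b) (nhdsWithin 0 Ω) (nhds (φ 0 b b)))
    {H : Type*} [NormedAddCommGroup H] [InnerProductSpace ℂ H]
    (J : H →ₗ[ℂ] (ℂ → ConjDual B))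
    (e : ℂ → B → H)
    (he : ∀ w ∈ Ω, ∀ (b : B), ∀ z ∈ Ω, ∀ c : B, J (e w b) z c = caraKernel φ z w b c)
    (hrep : ∀ (f : H), ∀ w ∈ Ω, ∀ b : B, inner ℂ (e w b) f = J f w b) :
    (∀ w ∈ Ω, ‖w‖ < 1 → ∀ b : B,
      ‖e w b - e 0 b‖ ^ 2 = ‖w‖ ^ 2 / (1 - ‖w‖ ^ 2) * (φ w b b).re) ∧
    (∀ (f : H) (b : B),
      Tendsto (fun w => J f w b) (nhdsWithin 0 Ω) (nhds (J f 0 b))) := by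
  have h0 : (0 : ℂ) ∈ Ω := mem_of_mem_nhds hΩ
  have hk : ∀ w ∈ Ω, ∀ z ∈ Ω, ∀ b c : B, inner ℂ (e w b) (e z c) = caraKernel φ w z c b :=
    fun w hw z hz b c => by rw [hrep _ w hw, he z hz c w hw b]
  refine ⟨fun w hw hw1 b => norm_sub_sq_of_inner_eq_caraKernel φ hk h0 hw hw1.ne b,
    fun f b => ?_⟩
  have hlim := (tendsto_nhdsWithin_zero_of_inner_eq_caraKernel φ hk hΩ hwc b).inner (𝕜 := ℂ)
    (tendsto_const_nhds (x := f))
  rw [hrep f 0 h0] at hlim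
  exact hlim.congr' (eventually_nhdsWithin_of_forall fun w hw => hrep f w hw b)
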